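/- Let α be an n×n hermitian complex matrix and let P₁ and P₂ be orthogonal projection matrices (P² = P = Pᴴ) of ranks p₁ and p₂ respectively, with p = p₁ + p₂ ≤ n. Then Tr(P₁ α) − Tr(P₂ α) ≤ Σ_{i=1}^{p} sᵢ(α), where s₁(α) ≥ s₂(α) ≥ … ≥ sₙ(α) are the singular values of α listed in decreasing order. -/

import Mathlib

open Matrix
open scoped ComplexOrder

noncomputable def traceNorm {ι : Type*} [Fintype ι] [DecidableEq ι]
    (A : Matrix ι ι ℂ) : ℝ :=
  ((((Matrix.posSemidef_conjTranspose_mul_self A).1.eigenvectorUnitary : Matrix ι ι ℂ) *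
      Matrix.diagonal (((↑) : ℝ → ℂ) ∘ (√·) ∘ (Matrix.posSemidef_conjTranspose_mul_self A).1.eigenvalues) *
      (star (Matrix.posSemidef_conjTranspose_mul_self A).1.eigenvectorUnitary : Matrix ι ι ℂ)).trace).re

noncomputable def mfun {ι : Type*} [Fintype ι] [DecidableEq ι] (g : ℝ → ℝ)
    (A : Matrix ι ι ℂ) : Matrix ι ι ℂ :=
  if hA : A.IsHermitian then
    (hA.eigenvectorUnitary : Matrix ι ι ℂ) *
      Matrix.diagonal (fun i => (g (hA.eigenvalues i) : ℂ)) *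
      (star hA.eigenvectorUnitary : Matrix ι ι ℂ)
  else 0

noncomputable def divDiff {ι : Type*} (g : ℝ → ℝ) (a : ι → ℝ) : Matrix ι ι ℝ :=
  Matrix.of fun i j =>
    if a i = a j then deriv g (a i) else (g (a i) - g (a j)) / (a i - a j)

noncomputable def Dop {ι : Type*} [Fintype ι] [DecidableEq ι] (g : ℝ → ℝ)
    {A : Matrix ι ι ℂ} (hA : A.IsHermitian) (B : Matrix ι ι ℂ) : Matrix ι ι ℂ :=
  (hA.eigenvectorUnitary : Matrix ι ι ℂ) *
    (((divDiff g hA.eigenvalues).map Complex.ofReal) ⊙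
      ((star hA.eigenvectorUnitary : Matrix ι ι ℂ) * B *
        (hA.eigenvectorUnitary : Matrix ι ι ℂ))) *
    (star hA.eigenvectorUnitary : Matrix ι ι ℂ)

noncomputable def relEnt {ι : Type*} [Fintype ι] [DecidableEq ι]
    (ρ σ : Matrix ι ι ℂ) : ℝ :=
  ((ρ * (mfun Real.log ρ - mfun Real.log σ)).trace).re

def ptrans {m n : Type*} (A : Matrix (m × n) (m × n) ℂ) : Matrix (m × n) (m × n) ℂ :=
  Matrix.of fun p q => A (p.1, q.2) (q.1, p.2)

/-- The singular values of a hermitian matrix (absolute values of eigenvalues),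
listed in decreasing order. -/
noncomputable def svals {N : ℕ} {α : Matrix (Fin N) (Fin N) ℂ}
    (hα : α.IsHermitian) : Fin N → ℝ :=
  fun i => |hα.eigenvalues (Tuple.sort (fun j => -|hα.eigenvalues j|) i)|

/-!
Diagonalize `α = U diag(λ) Uᴴ`. For an orthogonal projection `P`, the diagonal `dᵢ` of `Uᴴ P U`
lies in `[0, 1]` and sums to `rank P`, and `Tr(P α) = ∑ λᵢ dᵢ`. Hence the left-hand side is
`∑ λᵢ wᵢ` with `|wᵢ| ≤ 1` and `∑ |wᵢ| ≤ p₁ + p₂ = p`, which is at most `∑ |λᵢ| |wᵢ|`. Among all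
weights in `[0, 1]` of total mass at most `p`, the sum of the `p` largest values `|λᵢ|` is the
maximum of such a weighted sum.
-/

open Finset

namespace Matrix

variable {n : Type*} [Fintype n]

theorem trace_eq_rank_of_isIdempotentElem [DecidableEq n] {K : Type*} [Field K]
    {A : Matrix n n K} (hA : IsIdempotentElem A) : A.trace = A.rank := by
  have hlin : IsIdempotentElem (toLin' A) := hA.map toLinAlgEquiv'
  rw [← trace_toLin'_eq, (LinearMap.IsIdempotentElem.isProj_range _ hlin).trace]
  rfl

variable {𝕜 : Type*} [RCLike 𝕜]

theorem IsStarProjection.re_apply_self_nonneg {Q : Matrix n n 𝕜} (hQ : IsStarProjection Q)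
    (i : n) : 0 ≤ RCLike.re (Q i i) := by
  have hpsd : (Qᴴ * Q).PosSemidef := posSemidef_conjTranspose_mul_self Q
  rw [← star_eq_conjTranspose, hQ.isSelfAdjoint.star_eq, hQ.isIdempotentElem.eq] at hpsd
  exact (RCLike.nonneg_iff.mp hpsd.diag_nonneg).1

variable [DecidableEq n]

theorem IsStarProjection.re_apply_self_le_one {Q : Matrix n n 𝕜} (hQ : IsStarProjection Q)
    (i : n) : RCLike.re (Q i i) ≤ 1 := by
  simpa [one_apply_eq] using IsStarProjection.re_apply_self_nonneg hQ.one_sub i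

namespace IsHermitian

variable {A : Matrix n n 𝕜} (hA : A.IsHermitian)

/-- The diagonal of `P` in an orthonormal eigenbasis of `A`. -/
noncomputable def eigenbasisDiag (P : Matrix n n 𝕜) (i : n) : ℝ :=
  RCLike.re (Unitary.conjStarAlgAut 𝕜 _ (star hA.eigenvectorUnitary) P i i)

theorem re_trace_mul_eq_sum_eigenvalues_mul (P : Matrix n n 𝕜) :
    RCLike.re (P * A).trace = ∑ i, hA.eigenvalues i * hA.eigenbasisDiag P i := by
  rw [← trace_map' (Unitary.conjStarAlgAut 𝕜 _ (star hA.eigenvectorUnitary)), map_mul,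
    hA.conjStarAlgAut_star_eigenvectorUnitary]
  simp [trace, mul_diagonal, eigenbasisDiag, mul_comm]

variable {P : Matrix n n 𝕜} (hP : IsStarProjection P)
include hP

theorem eigenbasisDiag_mem_Icc (i : n) : hA.eigenbasisDiag P i ∈ Set.Icc 0 1 :=
  have hQ := hP.map (Unitary.conjStarAlgAut 𝕜 _ (star hA.eigenvectorUnitary))
  ⟨IsStarProjection.re_apply_self_nonneg hQ i, IsStarProjection.re_apply_self_le_one hQ i⟩

theorem sum_eigenbasisDiag : ∑ i, hA.eigenbasisDiag P i = P.rank :=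
  calc ∑ i, hA.eigenbasisDiag P i
      = RCLike.re (Unitary.conjStarAlgAut 𝕜 _ (star hA.eigenvectorUnitary) P).trace := by
        simp [eigenbasisDiag, trace]
    _ = P.rank := by
        rw [trace_map', trace_eq_rank_of_isIdempotentElem hP.isIdempotentElem, RCLike.natCast_re]

end IsHermitian

end Matrix

theorem Finset.sum_mul_le_sum_of_threshold {ι : Type*} [Fintype ι] [DecidableEq ι] (S : Finset ι)
    {s t : ι → ℝ} {τ : ℝ} (hτ : 0 ≤ τ) (hS : ∀ i ∈ S, τ ≤ s i) (hSc : ∀ i ∉ S, s i ≤ τ)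
    (ht0 : ∀ i, 0 ≤ t i) (ht1 : ∀ i, t i ≤ 1) (hsum : ∑ i, t i ≤ #S) :
    ∑ i, t i * s i ≤ ∑ i ∈ S, s i := by
  have hterm (i : ι) : t i * s i ≤ t i * τ + if i ∈ S then s i - τ else 0 := by
    split_ifs with hi
    · nlinarith [hS i hi, ht1 i]
    · nlinarith [hSc i hi, ht0 i]
  calc ∑ i, t i * s i ≤ ∑ i, (t i * τ + if i ∈ S then s i - τ else 0) :=
        sum_le_sum fun i _ => hterm i
    _ = (∑ i, t i) * τ + ∑ i ∈ S, (s i - τ) := by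
        rw [sum_add_distrib, ← sum_mul, sum_ite_mem, univ_inter]
    _ ≤ #S * τ + ∑ i ∈ S, (s i - τ) := by gcongr
    _ = ∑ i ∈ S, s i := by rw [sum_sub_distrib, sum_const, nsmul_eq_mul]; ring

theorem Fin.sum_mul_le_sum_filter_lt_of_antitone {N p : ℕ} {s t : Fin N → ℝ}
    (hs : Antitone s) (hs0 : ∀ i, 0 ≤ s i) (ht0 : ∀ i, 0 ≤ t i) (ht1 : ∀ i, t i ≤ 1)
    (hsum : ∑ i, t i ≤ p) :
    ∑ i, t i * s i ≤ ∑ i ∈ univ.filter (fun i : Fin N => (i : ℕ) < p), s i := by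
  by_cases hpN : p < N
  · refine sum_mul_le_sum_of_threshold _ (hs0 ⟨p, hpN⟩) (fun i hi => hs ?_)
      (fun i hi => hs ?_) ht0 ht1 ?_
    · simp only [mem_filter, mem_univ, true_and] at hi
      exact Fin.mk_le_of_le_val hi.le
    · simpa [Fin.le_def] using hi
    · rwa [card_filter_val_lt, min_eq_right hpN.le]
  · rw [filter_true_of_mem fun i _ => i.isLt.trans_le (not_lt.mp hpN)]
    exact sum_le_sum fun i _ => mul_le_of_le_one_left (hs0 i) (ht1 i)

theorem svals_antitone {N : ℕ} {α : Matrix (Fin N) (Fin N) ℂ} (hα : α.IsHermitian) :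
    Antitone (svals hα) := fun i j hij => by
  simpa [svals] using Tuple.monotone_sort (fun j => -|hα.eigenvalues j|) hij

theorem sum_eigenvalues_mul_le_sum_svals {N p : ℕ} {α : Matrix (Fin N) (Fin N) ℂ}
    (hα : α.IsHermitian) {w : Fin N → ℝ} (hw : ∀ i, |w i| ≤ 1) (hsum : ∑ i, |w i| ≤ p) :
    ∑ i, hα.eigenvalues i * w i ≤
      ∑ i ∈ univ.filter (fun i : Fin N => (i : ℕ) < p), svals hα i := by
  set σ := Tuple.sort (fun j => -|hα.eigenvalues j|)
  calc ∑ i, hα.eigenvalues i * w i ≤ ∑ i, |w i| * |hα.eigenvalues i| :=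
        sum_le_sum fun i _ => by rw [mul_comm, ← abs_mul]; exact le_abs_self _
    _ = ∑ i, |w (σ i)| * svals hα i := (Equiv.sum_comp σ _).symm
    _ ≤ _ := Fin.sum_mul_le_sum_filter_lt_of_antitone (svals_antitone hα)
        (fun _ => abs_nonneg _) (fun _ => abs_nonneg _) (fun _ => hw _)
        (by rwa [Equiv.sum_comp σ fun i => |w i|])

theorem trace_proj_sub_trace_proj_le_sum_singular_values_general
    {N : ℕ} (α P₁ P₂ : Matrix (Fin N) (Fin N) ℂ) (hα : α.IsHermitian)
    (hP₁proj : P₁ * P₁ = P₁) (hP₁herm : P₁.IsHermitian)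
    (hP₂proj : P₂ * P₂ = P₂) (hP₂herm : P₂.IsHermitian)
    (p₁ p₂ p : ℕ) (hp₁ : P₁.rank = p₁) (hp₂ : P₂.rank = p₂)
    (hp : p = p₁ + p₂) :
    ((P₁ * α).trace).re - ((P₂ * α).trace).re ≤
      ∑ i ∈ Finset.univ.filter (fun i : Fin N => (i : ℕ) < p), svals hα i := by
  have hP₁ : IsStarProjection P₁ := ⟨hP₁proj, hP₁herm.isSelfAdjoint⟩
  have hP₂ : IsStarProjection P₂ := ⟨hP₂proj, hP₂herm.isSelfAdjoint⟩
  set d₁ := hα.eigenbasisDiag P₁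
  set d₂ := hα.eigenbasisDiag P₂
  have hd₁ := hα.eigenbasisDiag_mem_Icc hP₁
  have hd₂ := hα.eigenbasisDiag_mem_Icc hP₂
  have hw (i : Fin N) : |d₁ i - d₂ i| ≤ 1 :=
    abs_sub_le_of_nonneg_of_le (hd₁ i).1 (hd₁ i).2 (hd₂ i).1 (hd₂ i).2
  have hsum : ∑ i, |d₁ i - d₂ i| ≤ p :=
    calc ∑ i, |d₁ i - d₂ i| ≤ ∑ i, (d₁ i + d₂ i) := sum_le_sum fun i _ =>
          abs_sub_le_iff.mpr ⟨by linarith [(hd₂ i).1], by linarith [(hd₁ i).1]⟩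
      _ = p := by
          rw [sum_add_distrib, hα.sum_eigenbasisDiag hP₁, hα.sum_eigenbasisDiag hP₂, hp₁, hp₂, hp]
          push_cast; rfl
  calc ((P₁ * α).trace).re - ((P₂ * α).trace).re = ∑ i, hα.eigenvalues i * (d₁ i - d₂ i) := by
        simp only [mul_sub, sum_sub_distrib]
        exact congrArg₂ _ (hα.re_trace_mul_eq_sum_eigenvalues_mul P₁)
          (hα.re_trace_mul_eq_sum_eigenvalues_mul P₂)
    _ ≤ _ := sum_eigenvalues_mul_le_sum_svals hα hw hsum

theorem trace_proj_sub_trace_proj_le_sum_singular_values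
    {N : ℕ} (α P₁ P₂ : Matrix (Fin N) (Fin N) ℂ) (hα : α.IsHermitian)
    (hP₁proj : P₁ * P₁ = P₁) (hP₁herm : P₁.IsHermitian)
    (hP₂proj : P₂ * P₂ = P₂) (hP₂herm : P₂.IsHermitian)
    (p₁ p₂ p : ℕ) (hp₁ : P₁.rank = p₁) (hp₂ : P₂.rank = p₂)
    (hp : p = p₁ + p₂) (hpN : p ≤ N) :
    ((P₁ * α).trace).re - ((P₂ * α).trace).re ≤
      ∑ i ∈ Finset.univ.filter (fun i : Fin N => (i : ℕ) < p), svals hα i :=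
  trace_proj_sub_trace_proj_le_sum_singular_values_general α P₁ P₂ hα hP₁proj hP₁herm hP₂proj
    hP₂herm p₁ p₂ p hp₁ hp₂ hp
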